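/- Let ω be a complex bilinear alternating 2-form on a complex vector space, and let u_1,…,u_m, w_1,…,w_m be vectors with ω(u_j, u_k) = ω(w_j, w_k) = 0 for all j, k. Then ω^m(u_1,…,u_m,w_1,…,w_m) = m! (-1)^{m(m-1)/2} det(ω(u_j, w_l)). -/

import Mathlib

/-- The m-th exterior power `ω^m` of a bilinear 2-form `ω`, evaluated on `2m`
vectors (determinant convention: for `ω = Σ dqⱼ∧dpⱼ` one has
`ω^m(e_{q1},e_{p1},…,e_{qm},e_{pm}) = m!`). -/
noncomputable def wedgePow {W : Type*} [AddCommGroup W] [Module ℂ W]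
    (ω : W →ₗ[ℂ] W →ₗ[ℂ] ℂ) (m : ℕ) (v : Fin (2 * m) → W) : ℂ :=
  (2 ^ m : ℂ)⁻¹ *
    ∑ σ : Equiv.Perm (Fin (2 * m)),
      ((Equiv.Perm.sign σ : ℤ) : ℂ) *
        ∏ j : Fin m,
          ω (v (σ ⟨2 * (j : ℕ), by have := j.isLt; omega⟩))
            (v (σ ⟨2 * (j : ℕ) + 1, by have := j.isLt; omega⟩))


namespace WedgeAux
open Equiv Equiv.Perm

lemma two_mul_lt {m : ℕ} (j : Fin m) : 2 * (j : ℕ) < 2 * m := by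
  have := j.isLt; omega

lemma two_mul_add_one_lt {m : ℕ} (j : Fin m) : 2 * (j : ℕ) + 1 < 2 * m := by
  have := j.isLt; omega

/-- `Fin m × Fin 2 ≃ Fin (2*m)`, `(j, s) ↦ 2j + s`. -/
def prodE (m : ℕ) : Fin m × Fin 2 ≃ Fin (2 * m) where
  toFun x := ⟨2 * x.1.1 + x.2.1, by have := x.1.isLt; have := x.2.isLt; omega⟩
  invFun i := (⟨i.1 / 2, by have := i.isLt; omega⟩, ⟨i.1 % 2, by omega⟩)
  left_inv x := by
    ext <;> simp <;> omega
  right_inv i := by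
    ext; simp; omega

/-- `Fin m ⊕ Fin m ≃ Fin (2*m)`, blocks. -/
def sumE (m : ℕ) : Fin m ⊕ Fin m ≃ Fin (2 * m) where
  toFun x := Sum.elim (fun j => ⟨j.1, by have := j.isLt; omega⟩)
    (fun j => ⟨m + j.1, by have := j.isLt; omega⟩) x
  invFun i := if h : i.1 < m then Sum.inl ⟨i.1, h⟩
    else Sum.inr ⟨i.1 - m, show i.1 - m < m + 0 by have := i.isLt; omega⟩
  left_inv x := by
    rcases x with j | j
    · simp
    · have := j.isLt
      simp only [Sum.elim_inr]
      show (if h : m + j.1 < m then (Sum.inl ⟨m + j.1, h⟩ : Fin m ⊕ Fin m)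
        else Sum.inr ⟨m + j.1 - m, by omega⟩) = Sum.inr j
      rw [dif_neg (by omega)]
      simp
  right_inv i := by
    by_cases h : i.1 < m
    · simp [h]
    · simp only [dif_neg h]
      have := i.isLt
      simp only [Sum.elim_inr]
      ext; simp; omega

/-- The interleaving permutation: `2j ↦ j`, `2j+1 ↦ m+j`. -/
def sigma0 (m : ℕ) : Perm (Fin (2 * m)) where
  toFun i := ⟨if i.1 % 2 = 0 then i.1 / 2 else m + i.1 / 2, by
    have := i.isLt; split <;> omega⟩
  invFun i := ⟨if i.1 < m then 2 * i.1 else 2 * (i.1 - m) + 1, by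
    have := i.isLt; split <;> omega⟩
  left_inv i := by
    have := i.isLt
    ext
    show (if (if i.1 % 2 = 0 then i.1 / 2 else m + i.1 / 2) < m
      then 2 * (if i.1 % 2 = 0 then i.1 / 2 else m + i.1 / 2)
      else 2 * ((if i.1 % 2 = 0 then i.1 / 2 else m + i.1 / 2) - m) + 1) = i.1
    by_cases h : i.1 % 2 = 0
    · rw [if_pos h, if_pos (by omega)]; omega
    · rw [if_neg h, if_neg (by omega)]; omega
  right_inv i := by
    have := i.isLt
    ext
    show (if (if i.1 < m then 2 * i.1 else 2 * (i.1 - m) + 1) % 2 = 0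
      then (if i.1 < m then 2 * i.1 else 2 * (i.1 - m) + 1) / 2
      else m + (if i.1 < m then 2 * i.1 else 2 * (i.1 - m) + 1) / 2) = i.1
    by_cases h : i.1 < m
    · rw [if_pos h, if_pos (by omega)]; omega
    · rw [if_neg h, if_neg (by omega)]; omega

lemma sigma0_even {m : ℕ} (j : Fin m) (h : 2 * j.1 < 2 * m) :
    sigma0 m ⟨2 * j.1, h⟩ = ⟨j.1, by have := j.isLt; omega⟩ := by
  ext
  show (if (2 * j.1) % 2 = 0 then (2 * j.1) / 2 else m + (2 * j.1) / 2) = j.1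
  rw [if_pos (by omega)]; omega

lemma sigma0_odd {m : ℕ} (j : Fin m) (h : 2 * j.1 + 1 < 2 * m) :
    sigma0 m ⟨2 * j.1 + 1, h⟩ = ⟨m + j.1, by have := j.isLt; omega⟩ := by
  ext
  show (if (2 * j.1 + 1) % 2 = 0 then (2 * j.1 + 1) / 2 else m + (2 * j.1 + 1) / 2) = m + j.1
  rw [if_neg (by omega)]; omega

/-- Swap within pair `j` whenever `ε j` is true. -/
def pairSwap {m : ℕ} (ε : Fin m → Bool) : Perm (Fin (2 * m)) :=
  (prodE m).permCongr (Equiv.prodCongrRight fun j => if ε j then Equiv.swap 0 1 else 1)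

/-- Act by `a` on the first block and by `b` on the second. -/
def blockPerm {m : ℕ} (a b : Perm (Fin m)) : Perm (Fin (2 * m)) :=
  (sumE m).permCongr (Equiv.sumCongr a b)

lemma blockPerm_lo {m : ℕ} (a b : Perm (Fin m)) (j : Fin m) (h : j.1 < 2 * m) :
    blockPerm a b ⟨j.1, h⟩ = ⟨(a j).1, by have := (a j).isLt; omega⟩ := by
  have h1 : (⟨j.1, h⟩ : Fin (2 * m)) = sumE m (Sum.inl j) := by ext; simp [sumE]
  rw [blockPerm, h1, permCongr_apply, Equiv.symm_apply_apply]
  rfl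

lemma blockPerm_hi {m : ℕ} (a b : Perm (Fin m)) (j : Fin m) (h : m + j.1 < 2 * m) :
    blockPerm a b ⟨m + j.1, h⟩ = ⟨m + (b j).1, by have := (b j).isLt; omega⟩ := by
  have h1 : (⟨m + j.1, h⟩ : Fin (2 * m)) = sumE m (Sum.inr j) := by ext; simp [sumE]
  rw [blockPerm, h1, permCongr_apply, Equiv.symm_apply_apply]
  rfl

lemma pairSwap_even {m : ℕ} (ε : Fin m → Bool) (j : Fin m) (h : 2 * j.1 < 2 * m) :
    pairSwap ε ⟨2 * j.1, h⟩ =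
      if ε j then ⟨2 * j.1 + 1, by have := j.isLt; omega⟩ else ⟨2 * j.1, h⟩ := by
  have h1 : (⟨2 * j.1, h⟩ : Fin (2 * m)) = prodE m (j, 0) := by ext; simp [prodE]
  rw [pairSwap, h1, permCongr_apply, Equiv.symm_apply_apply, prodCongrRight_apply]
  by_cases hj : ε j <;> simp only [hj, if_true, if_false]
  · ext; simp [prodE, Equiv.swap_apply_left]
  · ext; simp [prodE]

lemma pairSwap_odd {m : ℕ} (ε : Fin m → Bool) (j : Fin m) (h : 2 * j.1 + 1 < 2 * m) :
    pairSwap ε ⟨2 * j.1 + 1, h⟩ =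
      if ε j then ⟨2 * j.1, by omega⟩ else ⟨2 * j.1 + 1, h⟩ := by
  have h1 : (⟨2 * j.1 + 1, h⟩ : Fin (2 * m)) = prodE m (j, 1) := by ext; simp [prodE]
  rw [pairSwap, h1, permCongr_apply, Equiv.symm_apply_apply, prodCongrRight_apply]
  by_cases hj : ε j <;> simp only [hj, if_true, if_false]
  · ext; simp [prodE, Equiv.swap_apply_right]
  · ext; simp [prodE]

lemma sign_pairSwap {m : ℕ} (ε : Fin m → Bool) :
    sign (pairSwap ε) = ∏ j : Fin m, (if ε j then (-1 : ℤˣ) else 1) := by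
  rw [pairSwap, sign_permCongr, sign_prodCongrRight]
  refine Finset.prod_congr rfl fun j _ => ?_
  by_cases hj : ε j <;> simp [hj, Equiv.Perm.sign_swap (by decide : (0 : Fin 2) ≠ 1)]

lemma sign_blockPerm {m : ℕ} (a b : Perm (Fin m)) :
    sign (blockPerm a b) = sign a * sign b := by
  rw [blockPerm, sign_permCongr, sign_sumCongr]

def emb1 (m : ℕ) : Fin (2 * m) ↪ Fin (2 * (m + 1)) :=
  ⟨fun i => ⟨i.1, by have := i.isLt; omega⟩,
   fun i k h => by
    have h2 := congrArg Fin.val h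
    simp only [Fin.val_mk] at h2
    exact Fin.ext h2⟩

def emb2 (m : ℕ) : Fin (m + 1) ↪ Fin (2 * (m + 1)) :=
  ⟨fun j => ⟨m + j.1, by have := j.isLt; omega⟩,
   fun i k h => by
    have h2 := congrArg Fin.val h
    simp only [Fin.val_mk] at h2
    exact Fin.ext (by omega)⟩

lemma sigma0_apply_val (m : ℕ) (i : Fin (2 * m)) :
    (sigma0 m i).1 = if i.1 % 2 = 0 then i.1 / 2 else m + i.1 / 2 := rfl

lemma via1_apply (m : ℕ) (σ : Perm (Fin (2 * m))) (i : Fin (2 * (m + 1)))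
    (h : i.1 < 2 * m) :
    σ.viaFintypeEmbedding (emb1 m) i = ⟨(σ ⟨i.1, h⟩).1, by
      have := (σ ⟨i.1, h⟩).isLt; omega⟩ := by
  conv_lhs => rw [show i = emb1 m ⟨i.1, h⟩ from Fin.ext rfl]
  rw [Equiv.Perm.viaFintypeEmbedding_apply_image]
  rfl

lemma via1_apply_out (m : ℕ) (σ : Perm (Fin (2 * m))) (i : Fin (2 * (m + 1)))
    (h : ¬ i.1 < 2 * m) :
    σ.viaFintypeEmbedding (emb1 m) i = i := by
  apply Equiv.Perm.viaFintypeEmbedding_apply_notMem_range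
  rintro ⟨x, rfl⟩
  exact h x.isLt

lemma via2_apply_val (m : ℕ) (σ : Perm (Fin (m + 1))) (i : Fin (2 * (m + 1)))
    (h1 : m ≤ i.1) (h2 : i.1 < 2 * m + 1) :
    (σ.viaFintypeEmbedding (emb2 m) i).1 = m + (σ ⟨i.1 - m, by omega⟩).1 := by
  conv_lhs => rw [show i = emb2 m ⟨i.1 - m, by omega⟩ from Fin.ext (by
    show i.1 = m + (i.1 - m); omega)]
  rw [Equiv.Perm.viaFintypeEmbedding_apply_image]
  rfl

lemma via2_apply_out (m : ℕ) (σ : Perm (Fin (m + 1))) (i : Fin (2 * (m + 1)))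
    (h : i.1 < m ∨ 2 * m + 1 ≤ i.1) :
    σ.viaFintypeEmbedding (emb2 m) i = i := by
  apply Equiv.Perm.viaFintypeEmbedding_apply_notMem_range
  rintro ⟨x, rfl⟩
  have hx := x.isLt
  simp only [emb2, Function.Embedding.coeFn_mk, Fin.val_mk] at h
  change m + x.1 < m ∨ 2 * m + 1 ≤ m + x.1 at h
  omega

lemma finRotate_val (m : ℕ) (x : Fin (m + 1)) :
    (finRotate (m + 1) x).1 = (x.1 + 1) % (m + 1) := by
  rw [finRotate_succ_apply, Fin.val_add]
  simp [Nat.mod_self]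

lemma sigma0_succ (m : ℕ) :
    sigma0 (m + 1) = (finRotate (m + 1)).viaFintypeEmbedding (emb2 m) *
      (sigma0 m).viaFintypeEmbedding (emb1 m) := by
  apply Equiv.ext
  intro i
  have hi := i.isLt
  apply Fin.ext
  rw [Equiv.Perm.mul_apply, sigma0_apply_val]
  by_cases h1 : i.1 < 2 * m
  · rw [via1_apply m _ i h1]
    have hyv : (sigma0 m ⟨i.1, h1⟩).1
        = if i.1 % 2 = 0 then i.1 / 2 else m + i.1 / 2 := sigma0_apply_val m _
    by_cases h2 : i.1 % 2 = 0
    · rw [if_pos h2] at hyv ⊢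
      rw [via2_apply_out m _ _ (Or.inl (by simp only [Fin.val_mk]; omega))]
      simp only [Fin.val_mk]
      omega
    · rw [if_neg h2] at hyv ⊢
      rw [via2_apply_val m _ _ (by simp only [Fin.val_mk]; omega)
          (by simp only [Fin.val_mk]; omega), finRotate_val]
      simp only [Fin.val_mk]
      rw [Nat.mod_eq_of_lt (by omega)]
      omega
  · rw [via1_apply_out m _ i h1]
    by_cases h2 : i.1 = 2 * m
    · rw [via2_apply_val m _ _ (by omega) (by omega), finRotate_val]
      simp only [Fin.val_mk]
      rw [show i.1 - m + 1 = m + 1 from by omega, Nat.mod_self]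
      rw [if_pos (by omega)]
      omega
    · rw [via2_apply_out m _ _ (by omega)]
      rw [if_neg (by omega)]
      omega

lemma sign_sigma0 (m : ℕ) : sign (sigma0 m) = (-1) ^ (Nat.choose m 2) := by
  induction m with
  | zero =>
    have h0 : sigma0 0 = 1 := by
      apply Equiv.ext; intro i; exact absurd i.isLt (by omega)
    rw [h0]
    simp
  | succ m ih =>
    rw [sigma0_succ, Equiv.Perm.sign_mul, Equiv.Perm.viaFintypeEmbedding_sign,
      Equiv.Perm.viaFintypeEmbedding_sign, sign_finRotate, ih, ← pow_add,
      Nat.choose_succ_succ, Nat.choose_one_right]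
    simp

def Phi {m : ℕ} (a b : Perm (Fin m)) (ε : Fin m → Bool) : Perm (Fin (2 * m)) :=
  blockPerm a b * sigma0 m * pairSwap ε

lemma Phi_even {m : ℕ} (a b : Perm (Fin m)) (ε : Fin m → Bool) (j : Fin m)
    (h : 2 * j.1 < 2 * m) :
    Phi a b ε ⟨2 * j.1, h⟩ =
      if ε j then ⟨m + (b j).1, by have := (b j).isLt; omega⟩
      else ⟨(a j).1, by have := (a j).isLt; omega⟩ := by
  rw [Phi, Equiv.Perm.mul_apply, Equiv.Perm.mul_apply, pairSwap_even]
  by_cases hj : ε j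
  · rw [if_pos hj, if_pos hj, sigma0_odd, blockPerm_hi]
  · rw [if_neg hj, if_neg hj, sigma0_even, blockPerm_lo]

lemma Phi_odd {m : ℕ} (a b : Perm (Fin m)) (ε : Fin m → Bool) (j : Fin m)
    (h : 2 * j.1 + 1 < 2 * m) :
    Phi a b ε ⟨2 * j.1 + 1, h⟩ =
      if ε j then ⟨(a j).1, by have := (a j).isLt; omega⟩
      else ⟨m + (b j).1, by have := (b j).isLt; omega⟩ := by
  rw [Phi, Equiv.Perm.mul_apply, Equiv.Perm.mul_apply, pairSwap_odd]
  by_cases hj : ε j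
  · rw [if_pos hj, if_pos hj, sigma0_even, blockPerm_lo]
  · rw [if_neg hj, if_neg hj, sigma0_odd, blockPerm_hi]

lemma sign_Phi {m : ℕ} (a b : Perm (Fin m)) (ε : Fin m → Bool) :
    sign (Phi a b ε) =
      sign a * sign b * (-1) ^ (Nat.choose m 2) *
        ∏ j : Fin m, (if ε j then (-1 : ℤˣ) else 1) := by
  rw [Phi, Equiv.Perm.sign_mul, Equiv.Perm.sign_mul, sign_blockPerm, sign_sigma0,
    sign_pairSwap]

lemma Phi_injective {m : ℕ} (a a' b b' : Perm (Fin m)) (ε ε' : Fin m → Bool)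
    (h : Phi a b ε = Phi a' b' ε') : a = a' ∧ b = b' ∧ ε = ε' := by
  have he : ∀ j : Fin m, Phi a b ε ⟨2 * j.1, by have := j.isLt; omega⟩
      = Phi a' b' ε' ⟨2 * j.1, by have := j.isLt; omega⟩ := fun j => by rw [h]
  have ho : ∀ j : Fin m, Phi a b ε ⟨2 * j.1 + 1, by have := j.isLt; omega⟩
      = Phi a' b' ε' ⟨2 * j.1 + 1, by have := j.isLt; omega⟩ := fun j => by rw [h]
  have hee : ε = ε' := by
    funext j
    have h1 := he j
    rw [Phi_even a b ε j (by have := j.isLt; omega),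
      Phi_even a' b' ε' j (by have := j.isLt; omega)] at h1
    by_cases h2 : ε j <;> by_cases h3 : ε' j
    · rw [h2, h3]
    · rw [if_pos h2, if_neg h3] at h1
      have h4 := congrArg Fin.val h1
      simp only [Fin.val_mk] at h4
      exact absurd h4 (by have := (a' j).isLt; omega)
    · rw [if_neg h2, if_pos h3] at h1
      have h4 := congrArg Fin.val h1
      simp only [Fin.val_mk] at h4
      exact absurd h4 (by have := (a j).isLt; omega)
    · rw [Bool.not_eq_true] at h2 h3
      rw [h2, h3]
  subst hee
  refine ⟨?_, ?_, rfl⟩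
  · apply Equiv.ext
    intro j
    have h1 := he j
    have h2 := ho j
    rw [Phi_even a b ε j (by have := j.isLt; omega),
      Phi_even a' b' ε j (by have := j.isLt; omega)] at h1
    rw [Phi_odd a b ε j (by have := j.isLt; omega),
      Phi_odd a' b' ε j (by have := j.isLt; omega)] at h2
    by_cases h3 : ε j
    · rw [if_pos h3, if_pos h3] at h2
      have h4 := congrArg Fin.val h2
      simp only [Fin.val_mk] at h4
      exact Fin.ext h4
    · rw [if_neg h3, if_neg h3] at h1
      have h4 := congrArg Fin.val h1
      simp only [Fin.val_mk] at h4
      exact Fin.ext h4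
  · apply Equiv.ext
    intro j
    have h1 := he j
    have h2 := ho j
    rw [Phi_even a b ε j (by have := j.isLt; omega),
      Phi_even a' b' ε j (by have := j.isLt; omega)] at h1
    rw [Phi_odd a b ε j (by have := j.isLt; omega),
      Phi_odd a' b' ε j (by have := j.isLt; omega)] at h2
    by_cases h3 : ε j
    · rw [if_pos h3, if_pos h3] at h1
      have h4 := congrArg Fin.val h1
      simp only [Fin.val_mk] at h4
      exact Fin.ext (by omega)
    · rw [if_neg h3, if_neg h3] at h2
      have h4 := congrArg Fin.val h2
      simp only [Fin.val_mk] at h4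
      exact Fin.ext (by omega)

set_option maxHeartbeats 1000000 in
lemma key {W : Type*} [AddCommGroup W] [Module ℂ W]
    (ω : W →ₗ[ℂ] W →ₗ[ℂ] ℂ) (halt : ∀ v, ω v v = 0)
    (m : ℕ) (u w : Fin m → W)
    (hu : ∀ j k, ω (u j) (u k) = 0) (hw : ∀ j k, ω (w j) (w k) = 0)
    (v : Fin (2 * m) → W)
    (hv1 : ∀ (x : Fin (2 * m)) (h : x.1 < m), v x = u ⟨x.1, h⟩)
    (hv2 : ∀ (x : Fin (2 * m)) (h : ¬ x.1 < m),
      v x = w ⟨x.1 - m, show x.1 - m < m + 0 by have := x.isLt; omega⟩) :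
    wedgePow ω m v
      = (Nat.factorial m : ℂ) * (-1) ^ (m * (m - 1) / 2) *
          (Matrix.of fun j l : Fin m => ω (u j) (w l)).det := by
  classical
  have hW : wedgePow ω m v
      = (2 ^ m : ℂ)⁻¹ *
        ∑ σ : Equiv.Perm (Fin (2 * m)),
          ((Equiv.Perm.sign σ : ℤ) : ℂ) *
            ∏ j : Fin m,
              ω (v (σ ⟨2 * (j : ℕ), two_mul_lt j⟩))
                (v (σ ⟨2 * (j : ℕ) + 1, two_mul_add_one_lt j⟩)) := by
    rw [wedgePow]
  rw [hW]
  have hskew : ∀ x y : W, ω x y = - ω y x := by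
    intro x y
    have h := halt (x + y)
    simp only [map_add, LinearMap.add_apply, halt, zero_add, add_zero] at h
    linear_combination h
  have hvu : ∀ (x : Fin m) (h : x.1 < 2 * m), v ⟨x.1, h⟩ = u x := by
    intro x h
    rw [hv1 _ x.isLt]
  have hvw : ∀ (x : Fin m) (h : m + x.1 < 2 * m), v ⟨m + x.1, h⟩ = w x := by
    intro x h
    rw [hv2 _ (by simp only [Fin.val_mk]; omega)]
    exact congrArg w (Fin.ext (by simp only [Fin.val_mk]; omega))
  have hterm : ∀ (a b : Perm (Fin m)) (ε : Fin m → Bool),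
      ((Equiv.Perm.sign (Phi a b ε) : ℤ) : ℂ) *
          ∏ j : Fin m,
            ω (v (Phi a b ε ⟨2 * (j : ℕ), two_mul_lt j⟩))
              (v (Phi a b ε ⟨2 * (j : ℕ) + 1, two_mul_add_one_lt j⟩))
        = (-1) ^ (Nat.choose m 2) *
          (((Equiv.Perm.sign a : ℤ) : ℂ) * ((Equiv.Perm.sign b : ℤ) : ℂ) *
            ∏ j : Fin m, ω (u (a j)) (w (b j))) := by
    intro a b ε
    have hprod : (∏ j : Fin m,
        ω (v (Phi a b ε ⟨2 * (j : ℕ), two_mul_lt j⟩))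
          (v (Phi a b ε ⟨2 * (j : ℕ) + 1, two_mul_add_one_lt j⟩)))
        = (∏ j : Fin m, (if ε j then (-1 : ℂ) else 1)) *
          ∏ j : Fin m, ω (u (a j)) (w (b j)) := by
      rw [← Finset.prod_mul_distrib]
      refine Finset.prod_congr rfl fun j _ => ?_
      rw [Phi_even a b ε j (two_mul_lt j), Phi_odd a b ε j (two_mul_add_one_lt j)]
      by_cases hj : ε j
      · rw [if_pos hj, if_pos hj, if_pos hj, hvw (b j), hvu (a j),
          hskew (w (b j)) (u (a j))]
        ring
      · rw [if_neg hj, if_neg hj, if_neg hj, hvu (a j), hvw (b j)]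
        ring
    have hsign : ((Equiv.Perm.sign (Phi a b ε) : ℤ) : ℂ)
        = ((Equiv.Perm.sign a : ℤ) : ℂ) * ((Equiv.Perm.sign b : ℤ) : ℂ) *
          (-1) ^ (Nat.choose m 2) * ∏ j : Fin m, (if ε j then (-1 : ℂ) else 1) := by
      have hφ : ∀ x : ℤˣ, ((x : ℤ) : ℂ) =
          ((Int.castRingHom ℂ).toMonoidHom.comp (Units.coeHom ℤ)) x := fun _ => rfl
      have h1 : ((Int.castRingHom ℂ).toMonoidHom.comp (Units.coeHom ℤ)) (-1)
          = (-1 : ℂ) := by simp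
      rw [sign_Phi, hφ, map_mul, map_mul, map_mul, map_pow, map_prod,
        hφ (Equiv.Perm.sign a), hφ (Equiv.Perm.sign b), h1]
      exact congrArg (HMul.hMul _) (Finset.prod_congr rfl fun j _ => by
        by_cases hj : ε j <;> simp [hj])
    have hX : (∏ j : Fin m, (if ε j then (-1 : ℂ) else 1)) *
        (∏ j : Fin m, (if ε j then (-1 : ℂ) else 1)) = 1 := by
      rw [← Finset.prod_mul_distrib]
      refine Finset.prod_eq_one fun j _ => ?_
      by_cases hj : ε j <;> simp [hj]
    rw [hprod, hsign]
    linear_combination (((Equiv.Perm.sign a : ℤ) : ℂ) * ((Equiv.Perm.sign b : ℤ) : ℂ) *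
      (-1) ^ (Nat.choose m 2) * ∏ j : Fin m, ω (u (a j)) (w (b j))) * hX
  have hbij : ∑ t : (Perm (Fin m) × Perm (Fin m)) × (Fin m → Bool),
      (((Equiv.Perm.sign (Phi t.1.1 t.1.2 t.2) : ℤ) : ℂ) *
        ∏ j : Fin m,
          ω (v (Phi t.1.1 t.1.2 t.2 ⟨2 * (j : ℕ), two_mul_lt j⟩))
            (v (Phi t.1.1 t.1.2 t.2 ⟨2 * (j : ℕ) + 1, two_mul_add_one_lt j⟩)))
      = ∑ σ : Equiv.Perm (Fin (2 * m)),
          ((Equiv.Perm.sign σ : ℤ) : ℂ) *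
            ∏ j : Fin m,
              ω (v (σ ⟨2 * (j : ℕ), two_mul_lt j⟩))
                (v (σ ⟨2 * (j : ℕ) + 1, two_mul_add_one_lt j⟩)) := by
    apply Finset.sum_bij_ne_zero (i := fun t _ _ => Phi t.1.1 t.1.2 t.2)
    · intro t _ _
      exact Finset.mem_univ _
    · intro t1 h11 h12 t2 h21 h22 heq
      obtain ⟨ha, hb, he⟩ := Phi_injective _ _ _ _ _ _ heq
      exact Prod.ext (Prod.ext ha hb) he
    · -- surjectivity
      intro σ _ hσ
      have hfac : ∀ j : Fin m,
          ω (v (σ ⟨2 * (j : ℕ), two_mul_lt j⟩))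
            (v (σ ⟨2 * (j : ℕ) + 1, two_mul_add_one_lt j⟩)) ≠ 0 := by
        intro j hj0
        exact hσ (mul_eq_zero_of_right _
          (Finset.prod_eq_zero (Finset.mem_univ j) hj0))
      have hgood : ∀ j : Fin m,
          ((σ ⟨2 * (j : ℕ), two_mul_lt j⟩).1 < m ∧
            ¬ (σ ⟨2 * (j : ℕ) + 1, two_mul_add_one_lt j⟩).1 < m) ∨
          (¬ (σ ⟨2 * (j : ℕ), two_mul_lt j⟩).1 < m ∧
            (σ ⟨2 * (j : ℕ) + 1, two_mul_add_one_lt j⟩).1 < m) := by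
        intro j
        by_cases h1 : (σ ⟨2 * (j : ℕ), two_mul_lt j⟩).1 < m <;>
          by_cases h2 : (σ ⟨2 * (j : ℕ) + 1, two_mul_add_one_lt j⟩).1 < m
        · exfalso
          apply hfac j
          rw [hv1 _ h1, hv1 _ h2]
          exact hu _ _
        · exact Or.inl ⟨h1, h2⟩
        · exact Or.inr ⟨h1, h2⟩
        · exfalso
          apply hfac j
          rw [hv2 _ h1, hv2 _ h2]
          exact hw _ _
      have hfa : ∀ j : Fin m, ¬ (σ ⟨2 * (j : ℕ), two_mul_lt j⟩).1 < m →
          (σ ⟨2 * (j : ℕ) + 1, two_mul_add_one_lt j⟩).1 < m :=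
        fun j h => ((hgood j).resolve_left (fun hc => h hc.1)).2
      have hfb : ∀ j : Fin m, (σ ⟨2 * (j : ℕ), two_mul_lt j⟩).1 < m →
          ¬ (σ ⟨2 * (j : ℕ) + 1, two_mul_add_one_lt j⟩).1 < m :=
        fun j h => ((hgood j).resolve_right (fun hc => hc.1 h)).2
      obtain ⟨a, ha⟩ : ∃ a : Perm (Fin m), ∀ j : Fin m, a j =
          (if h : (σ ⟨2 * (j : ℕ), two_mul_lt j⟩).1 < m
            then (⟨(σ ⟨2 * (j : ℕ), two_mul_lt j⟩).1, h⟩ : Fin m)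
            else ⟨(σ ⟨2 * (j : ℕ) + 1, two_mul_add_one_lt j⟩).1, hfa j h⟩) := by
        have hinj : Function.Injective (fun j : Fin m =>
            (if h : (σ ⟨2 * (j : ℕ), two_mul_lt j⟩).1 < m
              then (⟨(σ ⟨2 * (j : ℕ), two_mul_lt j⟩).1, h⟩ : Fin m)
              else ⟨(σ ⟨2 * (j : ℕ) + 1, two_mul_add_one_lt j⟩).1, hfa j h⟩)) := by
          intro j k hjk
          simp only [] at hjk
          by_cases hj : (σ ⟨2 * (j : ℕ), two_mul_lt j⟩).1 < m <;>
            by_cases hk : (σ ⟨2 * (k : ℕ), two_mul_lt k⟩).1 < m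
          · rw [dif_pos hj, dif_pos hk] at hjk
            have h4 := congrArg Fin.val hjk
            simp only [Fin.val_mk] at h4
            have h5 := σ.injective (Fin.ext h4)
            have h6 := congrArg Fin.val h5
            simp only [Fin.val_mk] at h6
            exact Fin.ext (by omega)
          · rw [dif_pos hj, dif_neg hk] at hjk
            have h4 := congrArg Fin.val hjk
            simp only [Fin.val_mk] at h4
            have h5 := σ.injective (Fin.ext h4)
            have h6 := congrArg Fin.val h5
            simp only [Fin.val_mk] at h6
            exact absurd h6 (by omega)
          · rw [dif_neg hj, dif_pos hk] at hjk
            have h4 := congrArg Fin.val hjk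
            simp only [Fin.val_mk] at h4
            have h5 := σ.injective (Fin.ext h4)
            have h6 := congrArg Fin.val h5
            simp only [Fin.val_mk] at h6
            exact absurd h6 (by omega)
          · rw [dif_neg hj, dif_neg hk] at hjk
            have h4 := congrArg Fin.val hjk
            simp only [Fin.val_mk] at h4
            have h5 := σ.injective (Fin.ext h4)
            have h6 := congrArg Fin.val h5
            simp only [Fin.val_mk] at h6
            exact Fin.ext (by omega)
        exact ⟨Equiv.ofBijective _
          ((Fintype.bijective_iff_injective_and_card _).mpr ⟨hinj, rfl⟩),
          fun j => rfl⟩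
      obtain ⟨b, hb⟩ : ∃ b : Perm (Fin m), ∀ j : Fin m, b j =
          (if _ : (σ ⟨2 * (j : ℕ), two_mul_lt j⟩).1 < m
            then (⟨(σ ⟨2 * (j : ℕ) + 1, two_mul_add_one_lt j⟩).1 - m,
              by have := (σ ⟨2 * (j : ℕ) + 1, two_mul_add_one_lt j⟩).isLt; omega⟩ : Fin m)
            else ⟨(σ ⟨2 * (j : ℕ), two_mul_lt j⟩).1 - m,
              by have := (σ ⟨2 * (j : ℕ), two_mul_lt j⟩).isLt; omega⟩) := by
        have hinj : Function.Injective (fun j : Fin m =>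
            (if _ : (σ ⟨2 * (j : ℕ), two_mul_lt j⟩).1 < m
              then (⟨(σ ⟨2 * (j : ℕ) + 1, two_mul_add_one_lt j⟩).1 - m,
                by have := (σ ⟨2 * (j : ℕ) + 1, two_mul_add_one_lt j⟩).isLt; omega⟩ : Fin m)
              else ⟨(σ ⟨2 * (j : ℕ), two_mul_lt j⟩).1 - m,
                by have := (σ ⟨2 * (j : ℕ), two_mul_lt j⟩).isLt; omega⟩)) := by
          intro j k hjk
          simp only [] at hjk
          by_cases hj : (σ ⟨2 * (j : ℕ), two_mul_lt j⟩).1 < m <;>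
            by_cases hk : (σ ⟨2 * (k : ℕ), two_mul_lt k⟩).1 < m
          · rw [dif_pos hj, dif_pos hk] at hjk
            have hj2 := hfb j hj
            have hk2 := hfb k hk
            have h4 := congrArg Fin.val hjk
            simp only [Fin.val_mk] at h4
            have h5 := σ.injective (Fin.ext (show
              (σ ⟨2 * (j : ℕ) + 1, two_mul_add_one_lt j⟩).1
                = (σ ⟨2 * (k : ℕ) + 1, two_mul_add_one_lt k⟩).1 by omega))
            have h6 := congrArg Fin.val h5
            simp only [Fin.val_mk] at h6
            exact Fin.ext (by omega)
          · rw [dif_pos hj, dif_neg hk] at hjk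
            have hj2 := hfb j hj
            have h4 := congrArg Fin.val hjk
            simp only [Fin.val_mk] at h4
            have h5 := σ.injective (Fin.ext (show
              (σ ⟨2 * (j : ℕ) + 1, two_mul_add_one_lt j⟩).1
                = (σ ⟨2 * (k : ℕ), two_mul_lt k⟩).1 by omega))
            have h6 := congrArg Fin.val h5
            simp only [Fin.val_mk] at h6
            exact absurd h6 (by omega)
          · rw [dif_neg hj, dif_pos hk] at hjk
            have hk2 := hfb k hk
            have h4 := congrArg Fin.val hjk
            simp only [Fin.val_mk] at h4
            have h5 := σ.injective (Fin.ext (show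
              (σ ⟨2 * (j : ℕ), two_mul_lt j⟩).1
                = (σ ⟨2 * (k : ℕ) + 1, two_mul_add_one_lt k⟩).1 by omega))
            have h6 := congrArg Fin.val h5
            simp only [Fin.val_mk] at h6
            exact absurd h6 (by omega)
          · rw [dif_neg hj, dif_neg hk] at hjk
            have h4 := congrArg Fin.val hjk
            simp only [Fin.val_mk] at h4
            have h5 := σ.injective (Fin.ext (show
              (σ ⟨2 * (j : ℕ), two_mul_lt j⟩).1
                = (σ ⟨2 * (k : ℕ), two_mul_lt k⟩).1 by omega))
            have h6 := congrArg Fin.val h5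
            simp only [Fin.val_mk] at h6
            exact Fin.ext (by omega)
        exact ⟨Equiv.ofBijective _
          ((Fintype.bijective_iff_injective_and_card _).mpr ⟨hinj, rfl⟩),
          fun j => rfl⟩
      have hPe : ∀ j : Fin m,
          Phi a b (fun l : Fin m =>
              ! decide ((σ ⟨2 * (l : ℕ), two_mul_lt l⟩).1 < m))
            ⟨2 * (j : ℕ), two_mul_lt j⟩
          = σ ⟨2 * (j : ℕ), two_mul_lt j⟩ := by
        intro j
        rw [Phi_even a b _ j (two_mul_lt j)]
        by_cases h : (σ ⟨2 * (j : ℕ), two_mul_lt j⟩).1 < m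
        · rw [if_neg (by simp [h])]; simp only [ha j, dif_pos h, Fin.eta]
        · rw [if_pos (by simp [h])]; simp only [hb j, dif_neg h]
          have h7 := (σ ⟨2 * (j : ℕ), two_mul_lt j⟩).isLt
          exact Fin.ext (by simp only [Fin.val_mk]; omega)
      have hPo : ∀ j : Fin m,
          Phi a b (fun l : Fin m =>
              ! decide ((σ ⟨2 * (l : ℕ), two_mul_lt l⟩).1 < m))
            ⟨2 * (j : ℕ) + 1, two_mul_add_one_lt j⟩
          = σ ⟨2 * (j : ℕ) + 1, two_mul_add_one_lt j⟩ := by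
        intro j
        rw [Phi_odd a b _ j (two_mul_add_one_lt j)]
        by_cases h : (σ ⟨2 * (j : ℕ), two_mul_lt j⟩).1 < m
        · rw [if_neg (by simp [h])]; simp only [hb j, dif_pos h]
          have h7 := (σ ⟨2 * (j : ℕ) + 1, two_mul_add_one_lt j⟩).isLt
          have h8 := hfb j h
          exact Fin.ext (by simp only [Fin.val_mk]; omega)
        · rw [if_pos (by simp [h])]; simp only [ha j, dif_neg h, Fin.eta]
      have hPhi : Phi a b (fun l : Fin m =>
          ! decide ((σ ⟨2 * (l : ℕ), two_mul_lt l⟩).1 < m)) = σ := by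
        apply Equiv.ext
        intro i
        have hi := i.isLt
        by_cases hpar : i.1 % 2 = 0
        · have hieq : i = ⟨2 * ((⟨i.1 / 2, by omega⟩ : Fin m) : ℕ),
              by have := (⟨i.1 / 2, by omega⟩ : Fin m).isLt; omega⟩ :=
            Fin.ext (by simp only [Fin.val_mk]; omega)
          rw [hieq]
          exact hPe ⟨i.1 / 2, by omega⟩
        · have hieq : i = ⟨2 * ((⟨i.1 / 2, by omega⟩ : Fin m) : ℕ) + 1,
              by have := (⟨i.1 / 2, by omega⟩ : Fin m).isLt; omega⟩ :=
            Fin.ext (by simp only [Fin.val_mk]; omega)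
          rw [hieq]
          exact hPo ⟨i.1 / 2, by omega⟩
      refine ⟨((a, b), fun l : Fin m =>
          ! decide ((σ ⟨2 * (l : ℕ), two_mul_lt l⟩).1 < m)),
        Finset.mem_univ _, ?_, hPhi⟩
      have h9 := hσ
      rw [← hPhi] at h9
      exact h9
    · intro t h1 h2
      rfl
  have hdet : ∀ a : Perm (Fin m),
      ∑ b : Perm (Fin m), ((Equiv.Perm.sign a : ℤ) : ℂ) *
          ((Equiv.Perm.sign b : ℤ) : ℂ) * ∏ j : Fin m, ω (u (a j)) (w (b j))
      = (Matrix.of fun j l : Fin m => ω (u j) (w l)).det := by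
    intro a
    rw [← Equiv.sum_comp (Equiv.mulRight a) (fun b => ((Equiv.Perm.sign a : ℤ) : ℂ) *
      ((Equiv.Perm.sign b : ℤ) : ℂ) * ∏ j : Fin m, ω (u (a j)) (w (b j)))]
    rw [← Matrix.det_transpose, Matrix.det_apply']
    refine Finset.sum_congr rfl fun c _ => ?_
    have hsq : ((Equiv.Perm.sign a : ℤ) : ℂ) * ((Equiv.Perm.sign a : ℤ) : ℂ) = 1 := by
      rcases Int.units_eq_one_or (Equiv.Perm.sign a) with h | h <;> rw [h] <;> norm_num
    have e1 : Equiv.mulRight a c = c * a := rfl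
    rw [e1, Equiv.Perm.sign_mul, Units.val_mul, Int.cast_mul]
    have hpr : ∏ j : Fin m, ω (u (a j)) (w ((c * a) j))
        = ∏ i : Fin m,
            ((Matrix.of fun j l : Fin m => ω (u j) (w l)).transpose) (c i) i := by
      simp only [Equiv.Perm.mul_apply, Matrix.transpose_apply, Matrix.of_apply]
      exact Equiv.prod_comp a (fun i => ω (u i) (w (c i)))
    rw [hpr]
    linear_combination (((Equiv.Perm.sign c : ℤ) : ℂ) *
      ∏ i : Fin m,
        ((Matrix.of fun j l : Fin m => ω (u j) (w l)).transpose) (c i) i) * hsq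
  have hsplit : ∑ p : Perm (Fin m) × Perm (Fin m),
      (((Equiv.Perm.sign p.1 : ℤ) : ℂ) * ((Equiv.Perm.sign p.2 : ℤ) : ℂ) *
        ∏ j : Fin m, ω (u (p.1 j)) (w (p.2 j)))
      = (Nat.factorial m : ℂ) *
        (Matrix.of fun j l : Fin m => ω (u j) (w l)).det := by
    rw [Fintype.sum_prod_type]
    trans (∑ _a : Perm (Fin m), (Matrix.of fun j l : Fin m => ω (u j) (w l)).det)
    · exact Finset.sum_congr rfl fun a _ => hdet a
    · rw [Finset.sum_const, Finset.card_univ, Fintype.card_perm, Fintype.card_fin,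
        nsmul_eq_mul]
  have hsum2 : ∑ t : (Perm (Fin m) × Perm (Fin m)) × (Fin m → Bool),
      (((Equiv.Perm.sign (Phi t.1.1 t.1.2 t.2) : ℤ) : ℂ) *
        ∏ j : Fin m,
          ω (v (Phi t.1.1 t.1.2 t.2 ⟨2 * (j : ℕ), two_mul_lt j⟩))
            (v (Phi t.1.1 t.1.2 t.2 ⟨2 * (j : ℕ) + 1, two_mul_add_one_lt j⟩)))
      = (2 ^ m : ℂ) * ((-1) ^ (Nat.choose m 2) *
          ((Nat.factorial m : ℂ) *
            (Matrix.of fun j l : Fin m => ω (u j) (w l)).det)) := by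
    have hstep : ∀ p : Perm (Fin m) × Perm (Fin m),
        (∑ ε : Fin m → Bool,
          (((Equiv.Perm.sign (Phi p.1 p.2 ε) : ℤ) : ℂ) *
            ∏ j : Fin m,
              ω (v (Phi p.1 p.2 ε ⟨2 * (j : ℕ), two_mul_lt j⟩))
                (v (Phi p.1 p.2 ε ⟨2 * (j : ℕ) + 1, two_mul_add_one_lt j⟩))))
        = (2 ^ m : ℂ) * ((-1) ^ (Nat.choose m 2) *
            (((Equiv.Perm.sign p.1 : ℤ) : ℂ) * ((Equiv.Perm.sign p.2 : ℤ) : ℂ) *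
              ∏ j : Fin m, ω (u (p.1 j)) (w (p.2 j)))) := by
      intro p
      rw [Finset.sum_congr rfl fun ε _ => hterm p.1 p.2 ε, Finset.sum_const,
        Finset.card_univ, Fintype.card_fun, Fintype.card_bool, Fintype.card_fin,
        nsmul_eq_mul]
      push_cast
      ring
    rw [Fintype.sum_prod_type]
    trans (∑ p : Perm (Fin m) × Perm (Fin m), (2 ^ m : ℂ) *
        ((-1) ^ (Nat.choose m 2) *
          (((Equiv.Perm.sign p.1 : ℤ) : ℂ) * ((Equiv.Perm.sign p.2 : ℤ) : ℂ) *
            ∏ j : Fin m, ω (u (p.1 j)) (w (p.2 j)))))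
    · exact Finset.sum_congr rfl fun p _ => hstep p
    · rw [← Finset.mul_sum, ← Finset.mul_sum, hsplit]
  rw [← hbij, hsum2, Nat.choose_two_right]
  have h2 : (2 : ℂ) ^ m ≠ 0 := pow_ne_zero _ two_ne_zero
  field_simp

end WedgeAux

/- STATEMENT 13: if ω is a complex bilinear alternating 2-form and
u_1,…,u_m, w_1,…,w_m satisfy ω(u_j,u_k) = ω(w_j,w_k) = 0, then
ω^m(u_1,…,u_m,w_1,…,w_m) = m! · (-1)^{m(m-1)/2} · det(ω(u_j, w_l))
(note i^{m(m-1)} = (-1)^{m(m-1)/2}). -/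
theorem wedge_power_isotropic_det
    {W : Type*} [AddCommGroup W] [Module ℂ W]
    (ω : W →ₗ[ℂ] W →ₗ[ℂ] ℂ) (halt : ∀ v, ω v v = 0)
    (m : ℕ) (u w : Fin m → W)
    (hu : ∀ j k, ω (u j) (u k) = 0) (hw : ∀ j k, ω (w j) (w k) = 0) :
    wedgePow ω m
      (fun idx : Fin (2 * m) =>
        if h : (idx : ℕ) < m then u ⟨idx, h⟩
        else w ⟨(idx : ℕ) - m, by have := idx.isLt; omega⟩)
      = (Nat.factorial m : ℂ) * (-1) ^ (m * (m - 1) / 2) *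
          (Matrix.of fun j l : Fin m => ω (u j) (w l)).det := by
  exact WedgeAux.key ω halt m u w hu hw _ (fun x h => dif_pos h) (fun x h => dif_neg h)
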